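/- arXiv:1811.10256 — 6 statements merged into one kernel-verified Lean document; each statement's English description precedes it below -/
import Mathlib

section
/- Let Ω be a measurable space, let K and K' be measurable kernels from Ω to probability measures on Ω, let ε ≥ 0 and let m : Ω × Ω → ℝ. Suppose K satisfies ε·m-privacy, i.e. K(b)(Z) ≤ exp(ε·m(b, b'))·K(b')(Z) for all b, b' ∈ Ω and measurable Z. Then the composed kernel b ↦ (K(b)).bind K', whose value on a measurable set Z is ∫ K'(x)(Z) d(K(b))(x), also satisfies ε·m-privacy: for all b, b' ∈ Ω and all measurable Z, ((K(b)).bind K')(Z) ≤ exp(ε·m(b, b'))·((K(b')).bind K')(Z). (Privacy does not decrease under probabilistic post-processing.) -/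
open MeasureTheory ProbabilityTheory

namespace MeasureTheory.Measure

theorem bind_mono_left {α β : Type*} [MeasurableSpace α] [MeasurableSpace β]
    {μ ν : Measure α} (h : μ ≤ ν) {f : α → Measure β} (hf : Measurable f) :
    μ.bind f ≤ ν.bind f := by
  refine Measure.le_iff.2 fun s hs => ?_
  rw [bind_apply hs hf.aemeasurable, bind_apply hs hf.aemeasurable]
  exact lintegral_mono' h le_rfl

theorem bind_le_smul_bind {α β : Type*} [MeasurableSpace α] [MeasurableSpace β]
    {μ ν : Measure α} {c : ENNReal} (h : μ ≤ c • ν) {f : α → Measure β} (hf : Measurable f) :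
    μ.bind f ≤ c • ν.bind f :=
  (bind_mono_left h hf).trans_eq (bind_smul c ν f)

end MeasureTheory.Measure

theorem privacy_post_processing_bind_general {Ω : Type*} [MeasurableSpace Ω]
    (K K' : Kernel Ω Ω)
    (ε : ℝ) (m : Ω × Ω → ℝ)
    (hK : ∀ b b' (Z : Set Ω), MeasurableSet Z →
      K b Z ≤ ENNReal.ofReal (Real.exp (ε * m (b, b'))) * K b' Z) :
    ∀ b b' (Z : Set Ω), MeasurableSet Z →
      ((K b).bind fun x => K' x) Z ≤
        ENNReal.ofReal (Real.exp (ε * m (b, b'))) * ((K b').bind fun x => K' x) Z := by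
  intro b b' Z hZ
  have hle : K b ≤ ENNReal.ofReal (Real.exp (ε * m (b, b'))) • K b' :=
    Measure.le_iff.2 (hK b b')
  exact Measure.le_iff.1 (Measure.bind_le_smul_bind hle K'.measurable) Z hZ

/-- Privacy is preserved under probabilistic post-processing: if the Markov
kernel `K` satisfies `ε·m`-privacy, then so does the composed kernel `b ↦ (K b).bind K'`
for any Markov kernel `K'`. -/
theorem privacy_post_processing_bind {Ω : Type*} [MeasurableSpace Ω]
    (K K' : Kernel Ω Ω) [IsMarkovKernel K] [IsMarkovKernel K']
    (ε : ℝ) (hε : 0 ≤ ε) (m : Ω × Ω → ℝ)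
    (hK : ∀ b b' (Z : Set Ω), MeasurableSet Z →
      K b Z ≤ ENNReal.ofReal (Real.exp (ε * m (b, b'))) * K b' Z) :
    ∀ b b' (Z : Set Ω), MeasurableSet Z →
      ((K b).bind fun x => K' x) Z ≤
        ENNReal.ofReal (Real.exp (ε * m (b, b'))) * ((K b').bind fun x => K' x) Z :=
  privacy_post_processing_bind_general K K' ε m hK
end

section
/- Let X be a measurable space, let d be a pseudometric on X, let ε ≥ 0, and let K be a measurable kernel from X to probability measures on X satisfying ε·d-privacy: K(x)(Z) ≤ exp(ε·d(x, x'))·K(x')(Z) for all x, x' ∈ X and measurable Z ⊆ X. Fix N ≥ 1 and for v ∈ X^N let K̲(v) denote the product measure on X^N whose i-th factor is K(v_i). Then for all v, v' ∈ X^N and all measurable A ⊆ X^N, K̲(v)(A) ≤ exp(ε · Σ_{i=1}^{N} d(v_i, v'_i)) · K̲(v')(A). That is, the componentwise-independent mechanism satisfies ε·M_d-privacy where M_d(v, v') = Σ_i d(v_i, v'_i) is the Manhattan metric relative to d. -/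
open MeasureTheory ProbabilityTheory Finset
open scoped NNReal ENNReal

lemma my_prod_mono {α β : Type*} [MeasurableSpace α] [MeasurableSpace β]
    {μ₁ μ₂ : Measure α} {ν₁ ν₂ : Measure β} [SFinite ν₁] [SFinite ν₂]
    (hμ : μ₁ ≤ μ₂) (hν : ν₁ ≤ ν₂) : μ₁.prod ν₁ ≤ μ₂.prod ν₂ := by
  rw [Measure.le_iff]
  intro s hs
  rw [Measure.prod_apply hs, Measure.prod_apply hs]
  exact lintegral_mono' hμ fun x => Measure.le_iff'.1 hν _

lemma my_pi_mono {X : Type*} [MeasurableSpace X] :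
    ∀ (n : ℕ) (μ ν : Fin n → Measure X), (∀ i, SigmaFinite (μ i)) →
      (∀ i, SigmaFinite (ν i)) → (∀ i, μ i ≤ ν i) → Measure.pi μ ≤ Measure.pi ν := by
  intro n
  induction n with
  | zero =>
    intro μ ν _ _ _
    rw [Measure.pi_of_empty, Measure.pi_of_empty]
  | succ m ih =>
    intro μ ν hμf hνf h
    haveI := hμf; haveI := hνf
    have h1 := (measurePreserving_piFinSuccAbove μ 0).symm
    have h2 := (measurePreserving_piFinSuccAbove ν 0).symm
    rw [← h1.map_eq, ← h2.map_eq]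
    refine Measure.map_mono ?_ (MeasurableEquiv.piFinSuccAbove (fun _ => X) 0).symm.measurable
    exact my_prod_mono (h 0)
      (ih _ _ (fun i => hμf _) (fun i => hνf _) (fun i => h _))

lemma my_pi_smul {X : Type*} [MeasurableSpace X] {n : ℕ} (ν : Fin n → Measure X)
    [∀ i, SigmaFinite (ν i)] (c : Fin n → ℝ≥0) :
    Measure.pi (fun i => c i • ν i) = (∏ i, c i) • Measure.pi ν := by
  haveI : ∀ i, SigmaFinite ((c i) • ν i) := fun i => inferInstance
  refine (Measure.pi_eq (μ := fun i => c i • ν i) fun s hs => ?_)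
  rw [Measure.smul_apply, Measure.pi_pi]
  simp only [Measure.smul_apply, ENNReal.smul_def, smul_eq_mul, ENNReal.coe_finset_prod,
    ← Finset.prod_mul_distrib]

/-- If the Markov kernel `K` on `X` satisfies `ε·d`-privacy for a pseudometric
`d`, then the componentwise-independent mechanism `v ↦ ⊗_i K (v i)` on `X^N` satisfies
`ε·M_d`-privacy, where `M_d (v, v') = Σ_i d (v i) (v' i)` is the Manhattan metric. -/
theorem product_kernel_manhattan_privacy {X : Type*} [MeasurableSpace X]
    (d : X → X → ℝ)
    (hd_nonneg : ∀ x y, 0 ≤ d x y) (hd_self : ∀ x, d x x = 0)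
    (hd_symm : ∀ x y, d x y = d y x)
    (hd_tri : ∀ x y z, d x z ≤ d x y + d y z)
    (ε : ℝ) (hε : 0 ≤ ε)
    (K : Kernel X X) [IsMarkovKernel K]
    (hK : ∀ x x' (Z : Set X), MeasurableSet Z →
      K x Z ≤ ENNReal.ofReal (Real.exp (ε * d x x')) * K x' Z)
    (N : ℕ) (hN : 1 ≤ N) (v v' : Fin N → X)
    (A : Set (Fin N → X)) (hA : MeasurableSet A) :
    Measure.pi (fun i => K (v i)) A ≤
      ENNReal.ofReal (Real.exp (ε * ∑ i, d (v i) (v' i))) *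
        Measure.pi (fun i => K (v' i)) A := by
  set c : Fin N → ℝ≥0 := fun i => Real.toNNReal (Real.exp (ε * d (v i) (v' i))) with hc
  have hle : ∀ i, K (v i) ≤ (c i) • K (v' i) := by
    intro i
    rw [Measure.le_iff]
    intro s hs
    have := hK (v i) (v' i) s hs
    rw [Measure.smul_apply, ENNReal.smul_def, smul_eq_mul]
    exact this
  have hpi : Measure.pi (fun i => K (v i)) ≤
      Measure.pi (fun i => (c i) • K (v' i)) :=
    my_pi_mono N _ _ (fun i => inferInstance) (fun i => inferInstance) hle
  have hsmul := my_pi_smul (fun i => K (v' i)) c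
  calc Measure.pi (fun i => K (v i)) A ≤ Measure.pi (fun i => (c i) • K (v' i)) A :=
        Measure.le_iff'.1 hpi A
    _ = ((∏ i, c i : ℝ≥0) : ℝ≥0∞) * Measure.pi (fun i => K (v' i)) A := by
        rw [hsmul]; rfl
    _ = ENNReal.ofReal (Real.exp (ε * ∑ i, d (v i) (v' i))) *
        Measure.pi (fun i => K (v' i)) A := by
        congr 1
        rw [ENNReal.coe_finset_prod]
        have : ∀ i ∈ Finset.univ (α := Fin N),
            ((c i : ℝ≥0) : ℝ≥0∞) = ENNReal.ofReal (Real.exp (ε * d (v i) (v' i))) := by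
          intro i _; rfl
        rw [Finset.prod_congr rfl this, ← ENNReal.ofReal_prod_of_nonneg
          (fun i _ => (Real.exp_pos _).le)]
        congr 1
        rw [← Real.exp_sum]
        congr 1
        rw [Finset.mul_sum]
end

section
/- Let X be a countable set, let d be a pseudometric on X, let ε ≥ 0, and let K : X → PMF(X) satisfy ε·d-privacy pointwise: K(x)({z}) ≤ exp(ε·d(x, x'))·K(x')({z}) for all x, x', z ∈ X. Fix N ≥ 1 and for b : Fin N → X let K⋆(b) be the probability mass function on multisets over X obtained by pushing forward the product PMF (with i-th factor K(b_i)) along the map sending a tuple v ∈ X^N to the multiset of its components. Then for all b, b' : Fin N → X and every set Z of multisets over X, K⋆(b)(Z) ≤ exp(ε · min over permutations τ of {1,…,N} of Σ_{i=1}^{N} d(b_i, b'_{τ(i)})) · K⋆(b')(Z). (Since the Earth Mover's distance E_d between the two size-N bags equals (1/N)·min_τ Σ_i d(b_i, b'_{τ(i)}), this says the independent-application mechanism on bags of size N satisfies ε·N·E_d-privacy.) -/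
open Finset
open scoped ENNReal Classical

/-- The mechanism `K⋆` on bags of size `N`: the probability that applying
`K : X → PMF X` independently to each element of the input bag `b` produces a bag lying
in the set `Z` of multisets. It is the pushforward of the product distribution
(with `i`-th factor `K (b i)`) along the map sending a tuple to the multiset of its
components. -/
noncomputable def bagMechanism {X : Type*} (K : X → PMF X) {N : ℕ} (b : Fin N → X)
    (Z : Set (Multiset X)) : ℝ≥0∞ :=
  ∑' v : Fin N → X,
    if (↑(List.ofFn v) : Multiset X) ∈ Z then ∏ i, K (b i) (v i) else 0

private lemma ofFn_perm_eq {X : Type*} {N : ℕ} (v : Fin N → X) (σ : Equiv.Perm (Fin N)) :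
    (↑(List.ofFn (v ∘ σ)) : Multiset X) = ↑(List.ofFn v) := by
  have h1 : Multiset.map (⇑σ) Finset.univ.val = Finset.univ.val := by
    have := Finset.map_univ_equiv σ
    simpa [Finset.map] using congrArg Finset.val this
  calc (↑(List.ofFn (v ∘ σ)) : Multiset X)
      = Finset.univ.val.map (v ∘ σ) := (Fin.univ_val_map _).symm
    _ = Multiset.map v (Multiset.map (⇑σ) Finset.univ.val) := by
        rw [Multiset.map_map]
    _ = Finset.univ.val.map v := by rw [h1]
    _ = ↑(List.ofFn v) := Fin.univ_val_map _

/-- If `K : X → PMF X` (with `X` countable) satisfies `ε·d`-privacy for a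
pseudometric `d`, then the independent-application mechanism `K⋆` on bags of size `N ≥ 1`
satisfies, for all input tuples `b, b'` and all sets `Z` of multisets,
`K⋆(b)(Z) ≤ exp(ε · min_τ Σ_i d (b i) (b' (τ i))) · K⋆(b')(Z)`; i.e. `ε·N·E_d`-privacy,
since `N·E_d(b,b') = min_τ Σ_i d (b i) (b' (τ i))` for size-`N` bags. -/
theorem bag_mechanism_earth_mover_privacy {X : Type*} [Countable X]
    (d : X → X → ℝ)
    (hd_nonneg : ∀ x y, 0 ≤ d x y) (hd_self : ∀ x, d x x = 0)
    (hd_symm : ∀ x y, d x y = d y x)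
    (hd_tri : ∀ x y z, d x z ≤ d x y + d y z)
    (ε : ℝ) (hε : 0 ≤ ε)
    (K : X → PMF X)
    (hK : ∀ x x' z, K x z ≤ ENNReal.ofReal (Real.exp (ε * d x x')) * K x' z)
    (N : ℕ) (hN : 1 ≤ N) (b b' : Fin N → X) (Z : Set (Multiset X)) :
    bagMechanism K b Z ≤
      ENNReal.ofReal
          (Real.exp (ε * ⨅ τ : Equiv.Perm (Fin N), ∑ i, d (b i) (b' (τ i)))) *
        bagMechanism K b' Z := by

  obtain ⟨τ, hτ⟩ := Finite.exists_min (fun τ : Equiv.Perm (Fin N) => ∑ i, d (b i) (b' (τ i)))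
  have hinf : (⨅ σ : Equiv.Perm (Fin N), ∑ i, d (b i) (b' (σ i))) = ∑ i, d (b i) (b' (τ i)) :=
    le_antisymm (ciInf_le (Finite.bddBelow_range _) τ) (le_ciInf hτ)
  rw [hinf]
  -- invariance of bagMechanism under permuting b'
  have hinv : bagMechanism K b' Z = ∑' v : Fin N → X,
      (if (↑(List.ofFn v) : Multiset X) ∈ Z then ∏ i, K (b' (τ i)) (v i) else 0) := by
    rw [bagMechanism]
    let e : (Fin N → X) ≃ (Fin N → X) := Equiv.arrowCongr τ.symm (Equiv.refl X)
    rw [← Equiv.tsum_eq e (fun v => if (↑(List.ofFn v) : Multiset X) ∈ Z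
        then ∏ i, K (b' (τ i)) (v i) else 0)]
    apply tsum_congr
    intro v
    have hM : (↑(List.ofFn (e v)) : Multiset X) = ↑(List.ofFn v) := by
      have h : e v = v ∘ (τ : Equiv.Perm (Fin N)) := rfl
      rw [h, ofFn_perm_eq]
    rw [hM]
    congr 1
    exact (Equiv.prod_comp τ (fun j => K (b' j) (v j))).symm
  rw [hinv, bagMechanism, ← ENNReal.tsum_mul_left]
  apply ENNReal.tsum_le_tsum
  intro v
  by_cases hz : (↑(List.ofFn v) : Multiset X) ∈ Z
  · simp only [hz, if_true]
    calc (∏ i, K (b i) (v i))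
        ≤ ∏ i, (ENNReal.ofReal (Real.exp (ε * d (b i) (b' (τ i)))) * K (b' (τ i)) (v i)) :=
          Finset.prod_le_prod' (fun i _ => hK (b i) (b' (τ i)) (v i))
      _ = (∏ i, ENNReal.ofReal (Real.exp (ε * d (b i) (b' (τ i))))) *
            ∏ i, K (b' (τ i)) (v i) := by rw [Finset.prod_mul_distrib]
      _ = ENNReal.ofReal (Real.exp (ε * ∑ i, d (b i) (b' (τ i)))) *
            ∏ i, K (b' (τ i)) (v i) := by
          congr 1
          rw [← ENNReal.ofReal_prod_of_nonneg (fun i _ => (Real.exp_pos _).le)]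
          congr 1
          rw [← Real.exp_sum, Finset.mul_sum]
  · simp [hz]
end

section
/- Let n ≥ 1 be an integer, ε > 0, and R ≥ 0. Then the integral over the closed Euclidean ball {x ∈ ℝ^n : ‖x‖ ≤ R} (with Lebesgue measure) of c_n^ε·exp(−ε‖x‖), where c_n^ε = ε^n · Γ(n/2+1) / (Γ(n) · n · π^{n/2}), equals 1 − exp(−ε·R) · Σ_{k=0}^{n−1} (ε·R)^k / k!. That is, the probability that a vector sampled from the n-dimensional Laplacian with parameter ε lies within Euclidean distance R of the origin is 1 − e^{−εR}·e_{n−1}(εR). -/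
/-!
In polar coordinates a radial integral over a ball is one-dimensional:
`∫_{‖x‖ ≤ R} f ‖x‖ dx = n ω_n ∫_0^R r^(n-1) f r dr`, with `ω_n = π^(n/2) / Γ(n/2 + 1)` the volume
of the unit ball. For `f r = exp (-ε r)` the radial integral is a lower incomplete Gamma function,
and since `exp (-y) e_m(y)` has derivative `-exp (-y) y^m / m!`, one gets
`∫_0^T y^m exp (-y) dy = m! (1 - exp (-T) e_m(T))`. Finally `c_n^ε = ε^n / (n ω_n (n-1)!)`, which is
exactly the factor that normalises the result.
-/

open MeasureTheory Real Finset

/-- The normalising constant of the `n`-dimensional Laplacian density with parameter `ε`. -/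
noncomputable def lapConst (n : ℕ) (ε : ℝ) : ℝ :=
  ε ^ n * Real.Gamma ((n : ℝ) / 2 + 1) / (Real.Gamma n * n * Real.pi ^ ((n : ℝ) / 2))

open Metric
open scoped Nat

theorem hasDerivAt_sum_range_pow_div_factorial (m : ℕ) (y : ℝ) :
    HasDerivAt (fun y : ℝ => ∑ k ∈ range (m + 1), y ^ k / k !)
      (∑ k ∈ range m, y ^ k / k !) y := by
  induction m with
  | zero => simpa using hasDerivAt_const y (1 : ℝ)
  | succ m ih =>
    have hlast : HasDerivAt (fun y : ℝ => y ^ (m + 1) / (m + 1)!) (y ^ m / m !) y := by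
      refine ((hasDerivAt_pow (m + 1) y).div_const ((m + 1)! : ℝ)).congr_deriv ?_
      rw [Nat.factorial_succ]
      push_cast
      field_simp
    simp only [sum_range_succ _ (m + 1)]
    exact (ih.add hlast).congr_deriv (sum_range_succ _ m).symm

theorem hasDerivAt_exp_neg_mul_sum_range (m : ℕ) (y : ℝ) :
    HasDerivAt (fun y : ℝ => exp (-y) * ∑ k ∈ range (m + 1), y ^ k / k !)
      (-(exp (-y) * (y ^ m / m !))) y := by
  refine ((hasDerivAt_neg' y).exp.mul (hasDerivAt_sum_range_pow_div_factorial m y)).congr_deriv ?_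
  rw [sum_range_succ]
  ring

theorem integral_pow_mul_exp_neg (m : ℕ) (T : ℝ) :
    ∫ y in (0 : ℝ)..T, y ^ m * exp (-y) =
      m ! * (1 - exp (-T) * ∑ k ∈ range (m + 1), T ^ k / k !) := by
  have hderiv (y : ℝ) :
      HasDerivAt (fun y : ℝ => -(m ! * (exp (-y) * ∑ k ∈ range (m + 1), y ^ k / k !)))
        (y ^ m * exp (-y)) y := by
    refine ((hasDerivAt_exp_neg_mul_sum_range m y).const_mul (m ! : ℝ)).neg.congr_deriv ?_
    field_simp
  rw [intervalIntegral.integral_eq_sub_of_hasDerivAt (fun y _ => hderiv y)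
    (Continuous.intervalIntegrable (by fun_prop) _ _)]
  simp [sum_range_succ']
  ring

theorem integral_pow_mul_exp_neg_mul (m : ℕ) {ε : ℝ} (hε : ε ≠ 0) (R : ℝ) :
    ∫ r in (0 : ℝ)..R, r ^ m * exp (-ε * r) =
      m ! / ε ^ (m + 1) * (1 - exp (-ε * R) * ∑ k ∈ range (m + 1), (ε * R) ^ k / k !) := by
  have hscale (r : ℝ) : r ^ m * exp (-ε * r) = (ε ^ m)⁻¹ * ((ε * r) ^ m * exp (-(ε * r))) := by
    field_simp
    ring_nf
  simp_rw [hscale]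
  rw [intervalIntegral.integral_const_mul,
    intervalIntegral.integral_comp_mul_left (fun y => y ^ m * exp (-y)) hε, mul_zero,
    integral_pow_mul_exp_neg, smul_eq_mul, neg_mul]
  field_simp
  ring

theorem setIntegral_closedBall_fun_norm_addHaar {E F : Type*} [NormedAddCommGroup E]
    [NormedSpace ℝ E] [FiniteDimensional ℝ E] [Nontrivial E] [MeasurableSpace E] [BorelSpace E]
    [NormedAddCommGroup F] [NormedSpace ℝ F] (μ : Measure E) [μ.IsAddHaarMeasure]
    (f : ℝ → F) {R : ℝ} (hR : 0 ≤ R) :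
    ∫ x in closedBall (0 : E) R, f ‖x‖ ∂μ =
      Module.finrank ℝ E • μ.real (ball 0 1) •
        ∫ y in (0 : ℝ)..R, y ^ (Module.finrank ℝ E - 1) • f y := by
  have hind : (closedBall (0 : E) R).indicator (fun x => f ‖x‖) =
      fun x => (Set.Iic R).indicator f ‖x‖ := by
    ext x
    by_cases h : ‖x‖ ≤ R <;> simp [h]
  rw [← MeasureTheory.integral_indicator measurableSet_closedBall, hind,
    integral_fun_norm_addHaar μ ((Set.Iic R).indicator f), intervalIntegral.integral_of_le hR,
    ← Set.Ioi_inter_Iic, ← setIntegral_indicator measurableSet_Iic]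
  simp_rw [Set.indicator_smul]

theorem EuclideanSpace.volume_real_ball_zero_one (ι : Type*) [Fintype ι] [Nonempty ι] :
    volume.real (ball (0 : EuclideanSpace ℝ ι) 1) =
      π ^ ((Fintype.card ι : ℝ) / 2) / Gamma (Fintype.card ι / 2 + 1) := by
  rw [measureReal_def, EuclideanSpace.volume_ball, ENNReal.ofReal_one, one_pow,
    one_mul, ENNReal.toReal_ofReal (by positivity), rpow_div_two_eq_sqrt _ pi_pos.le, rpow_natCast]

theorem lapConst_mul_eq_one (m : ℕ) {ε : ℝ} (hε : ε ≠ 0) :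
    lapConst (m + 1) ε *
      ((m + 1 : ℕ) * volume.real (ball (0 : EuclideanSpace ℝ (Fin (m + 1))) 1) *
        (m ! / ε ^ (m + 1))) = 1 := by
  have hΓ : Gamma ((m + 1 : ℕ) : ℝ) = m ! := by
    rw [Nat.cast_succ, Gamma_nat_eq_factorial]
  have := Gamma_pos_of_pos (by positivity : (0 : ℝ) < ((m + 1 : ℕ) : ℝ) / 2 + 1)
  rw [lapConst, EuclideanSpace.volume_real_ball_zero_one, Fintype.card_fin, hΓ]
  field_simp

/-- For `n ≥ 1`, `ε > 0` and `R ≥ 0`, the integral over the closed Euclidean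
ball of radius `R` in `ℝ^n` of the `n`-dimensional Laplacian density `c_n^ε·exp(−ε‖x‖)`
equals `1 − exp(−εR) · Σ_{k=0}^{n−1} (εR)^k / k!`. -/
theorem laplacian_ball_probability (n : ℕ) (hn : 1 ≤ n) (ε : ℝ) (hε : 0 < ε)
    (R : ℝ) (hR : 0 ≤ R) :
    ∫ x in Metric.closedBall (0 : EuclideanSpace ℝ (Fin n)) R,
        lapConst n ε * Real.exp (-ε * ‖x‖) =
      1 - Real.exp (-ε * R) * ∑ k ∈ Finset.range n, (ε * R) ^ k / (Nat.factorial k) := by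
  obtain ⟨m, rfl⟩ : ∃ m, n = m + 1 := ⟨n - 1, by omega⟩
  rw [setIntegral_closedBall_fun_norm_addHaar volume
      (fun r => lapConst (m + 1) ε * exp (-ε * r)) hR,
    finrank_euclideanSpace_fin, Nat.add_sub_cancel]
  simp only [smul_eq_mul, nsmul_eq_mul, mul_left_comm _ (lapConst _ _),
    intervalIntegral.integral_const_mul]
  rw [integral_pow_mul_exp_neg_mul m hε.ne']
  linear_combination (1 - exp (-ε * R) * ∑ k ∈ range (m + 1), (ε * R) ^ k / k !) *
    lapConst_mul_eq_one m hε.ne'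
end

section
/- Let n ≥ 1 be an integer and ε > 0. For x ∈ ℝ^n, let μ_x be the measure on ℝ^n with density v ↦ c_n^ε·exp(−ε‖v − x‖) with respect to Lebesgue measure, where ‖·‖ is the Euclidean norm and c_n^ε = ε^n · Γ(n/2+1) / (Γ(n) · n · π^{n/2}). Then for all x, y ∈ ℝ^n and all Lebesgue-measurable sets A ⊆ ℝ^n, μ_x(A) ≤ exp(ε·‖x − y‖) · μ_y(A). That is, the mechanism adding n-dimensional Laplacian noise with parameter ε satisfies ε·‖·‖-privacy with respect to the Euclidean metric on ℝ^n. -/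
open MeasureTheory Real

/-- The `n`-dimensional Laplacian measure with parameter `ε` centered at `x ∈ ℝ^n`. -/
noncomputable def lapMeasure (n : ℕ) (ε : ℝ) (x : EuclideanSpace ℝ (Fin n)) :
    Measure (EuclideanSpace ℝ (Fin n)) :=
  volume.withDensity fun v => ENNReal.ofReal (lapConst n ε * Real.exp (-ε * ‖v - x‖))

/-- The mechanism adding `n`-dimensional Laplacian noise with parameter `ε`
satisfies `ε·‖·‖`-privacy with respect to the Euclidean metric: for all `x, y ∈ ℝ^n` and
all measurable `A ⊆ ℝ^n`, `μ_x(A) ≤ exp(ε·‖x − y‖) · μ_y(A)`. -/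
theorem lapMeasure_privacy (n : ℕ) (hn : 1 ≤ n) (ε : ℝ) (hε : 0 < ε)
    (x y : EuclideanSpace ℝ (Fin n)) (A : Set (EuclideanSpace ℝ (Fin n)))
    (hA : MeasurableSet A) :
    lapMeasure n ε x A ≤ ENNReal.ofReal (Real.exp (ε * ‖x - y‖)) * lapMeasure n ε y A := by
  have hc : 0 ≤ lapConst n ε := by
    unfold lapConst
    have h1 : 0 < Real.Gamma ((n : ℝ) / 2 + 1) := Real.Gamma_pos_of_pos (by positivity)
    have h2 : 0 < Real.Gamma n := Real.Gamma_pos_of_pos (by exact_mod_cast hn)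
    have h3 : (0:ℝ) < n := by exact_mod_cast hn
    positivity
  unfold lapMeasure
  rw [withDensity_apply _ hA, withDensity_apply _ hA, ← lintegral_const_mul''
    _ (by fun_prop)]
  refine lintegral_mono fun v => ?_
  rw [← ENNReal.ofReal_mul (Real.exp_nonneg _)]
  refine ENNReal.ofReal_le_ofReal ?_
  rw [show Real.exp (ε * ‖x - y‖) * (lapConst n ε * Real.exp (-ε * ‖v - y‖))
      = lapConst n ε * Real.exp (ε * ‖x - y‖ + -ε * ‖v - y‖) by rw [Real.exp_add]; ring]
  refine mul_le_mul_of_nonneg_left (Real.exp_le_exp.2 ?_) hc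
  have htri : ‖v - y‖ ≤ ‖v - x‖ + ‖x - y‖ := by
    have := norm_add_le (v - x) (x - y)
    simpa [sub_add_sub_cancel] using this
  nlinarith [hε.le]
end

section
/- Let n ≥ 1 and N ≥ 1 be integers and ε > 0. For b : Fin N → ℝ^n, let μ_b be the product measure on (ℝ^n)^N whose i-th factor is the n-dimensional Laplacian measure centered at b_i (density v ↦ c_n^ε·exp(−ε‖v − b_i‖) with respect to Lebesgue measure on ℝ^n). Then for all b, b' : Fin N → ℝ^n and every measurable set A ⊆ (ℝ^n)^N that is invariant under every permutation of the N coordinates, μ_b(A) ≤ exp(ε · min over permutations τ of {1,…,N} of Σ_{i=1}^{N} ‖b_i − b'_{τ(i)}‖) · μ_{b'}(A). (Since N·E_{‖·‖}(b, b') = min_τ Σ_i ‖b_i − b'_{τ(i)}‖ for size-N bags, this says the Earth Mover's privacy mechanism of Algorithm 1 satisfies ε·N·E_{‖·‖}-privacy on bags of size N in ℝ^n.) -/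
open MeasureTheory Real Finset

section aux

open scoped ENNReal

variable {ι : Type*} [Fintype ι] [DecidableEq ι] {α : ι → Type*} [∀ i, MeasurableSpace (α i)]

lemma lmarginal_prod_aux (μ : ∀ i, Measure (α i)) [∀ i, SigmaFinite (μ i)]
    (g : ∀ i, α i → ℝ≥0∞) (hg : ∀ i, Measurable (g i)) (s : Finset ι) :
    (∫⋯∫⁻_s, (fun x => ∏ i, g i (x i)) ∂μ)
      = fun x => (∏ i ∈ s, ∫⁻ y, g i y ∂μ i) * ∏ i ∈ sᶜ, g i (x i) := by
  have hf : Measurable fun x : ∀ i, α i => ∏ i, g i (x i) :=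
    Finset.measurable_prod _ fun i _ => (hg i).comp (measurable_pi_apply i)
  induction s using Finset.induction with
  | empty => simp
  | @insert i s hi ih =>
    ext x
    rw [lmarginal_insert _ hf hi]
    simp_rw [ih]
    have hisc : i ∈ sᶜ := by simpa using hi
    have key : ∀ xᵢ, ∏ j ∈ sᶜ, g j (Function.update x i xᵢ j)
        = g i xᵢ * ∏ j ∈ (insert i s)ᶜ, g j (x j) := by
      intro xᵢ
      rw [Finset.compl_insert, ← Finset.mul_prod_erase _ _ hisc, Function.update_self]
      congr 1
      exact Finset.prod_congr rfl fun j hj => by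
        rw [Function.update_of_ne (Finset.ne_of_mem_erase hj)]
    simp_rw [key]
    have : ∀ xᵢ, (∏ j ∈ s, ∫⁻ y, g j y ∂μ j) * (g i xᵢ * ∏ j ∈ (insert i s)ᶜ, g j (x j))
        = ((∏ j ∈ s, ∫⁻ y, g j y ∂μ j) * ∏ j ∈ (insert i s)ᶜ, g j (x j)) * g i xᵢ := by
      intro xᵢ; ring
    simp_rw [this]
    rw [lintegral_const_mul _ (hg i), Finset.prod_insert hi]
    ring

lemma lintegral_pi_prod_aux (μ : ∀ i, Measure (α i)) [∀ i, SigmaFinite (μ i)]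
    [Nonempty (∀ i, α i)]
    (g : ∀ i, α i → ℝ≥0∞) (hg : ∀ i, Measurable (g i)) :
    ∫⁻ x, ∏ i, g i (x i) ∂Measure.pi μ = ∏ i, ∫⁻ y, g i y ∂μ i := by
  obtain ⟨x⟩ := (inferInstance : Nonempty (∀ i, α i))
  rw [lintegral_eq_lmarginal_univ x, lmarginal_prod_aux μ g hg]
  simp

lemma pi_withDensity_aux (μ : ∀ i, Measure (α i)) [∀ i, SigmaFinite (μ i)]
    [Nonempty (∀ i, α i)]
    (f : ∀ i, α i → ℝ≥0∞) (hf : ∀ i, Measurable (f i))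
    [∀ i, SigmaFinite ((μ i).withDensity (f i))] :
    Measure.pi (fun i => (μ i).withDensity (f i))
      = (Measure.pi μ).withDensity (fun x => ∏ i, f i (x i)) := by
  refine Measure.pi_eq (μ := fun i => (μ i).withDensity (f i)) fun s hs => ?_
  rw [withDensity_apply _ (MeasurableSet.univ_pi hs),
    ← lintegral_indicator (MeasurableSet.univ_pi hs)]
  have hind : ∀ x, (Set.univ.pi s).indicator (fun x => ∏ i, f i (x i)) x
      = ∏ i, (s i).indicator (f i) (x i) := by
    intro x
    by_cases hx : x ∈ Set.univ.pi s
    · rw [Set.indicator_of_mem hx]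
      exact Finset.prod_congr rfl fun i _ =>
        (Set.indicator_of_mem (hx i (Set.mem_univ i)) _).symm
    · rw [Set.indicator_of_notMem hx]
      rw [Set.mem_univ_pi, not_forall] at hx
      obtain ⟨i, hi⟩ := hx
      exact (Finset.prod_eq_zero (Finset.mem_univ i)
        (Set.indicator_of_notMem hi _)).symm
  simp_rw [hind]
  rw [lintegral_pi_prod_aux μ _ (fun i => (hf i).indicator (hs i))]
  exact Finset.prod_congr rfl fun i _ => by
    rw [lintegral_indicator (hs i), ← withDensity_apply _ (hs i)]

end aux

lemma lapConst_nonneg (n : ℕ) (hn : 1 ≤ n) {ε : ℝ} (hε : 0 < ε) : 0 ≤ lapConst n ε := by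
  have hn' : (0 : ℝ) < n := by exact_mod_cast hn
  have h1 : 0 < Real.Gamma ((n : ℝ) / 2 + 1) := Real.Gamma_pos_of_pos (by positivity)
  have h2 : 0 < Real.Gamma n := Real.Gamma_pos_of_pos hn'
  have h3 : 0 < Real.pi ^ ((n : ℝ) / 2) := Real.rpow_pos_of_pos Real.pi_pos _
  exact le_of_lt (div_pos (mul_pos (pow_pos hε n) h1) (mul_pos (mul_pos h2 hn') h3))

instance (n : ℕ) (ε : ℝ) (x : EuclideanSpace ℝ (Fin n)) : SigmaFinite (lapMeasure n ε x) := by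
  unfold lapMeasure; infer_instance

/-- the mechanism applying independent `n`-dimensional Laplacian noise to
each of the `N` elements of a bag satisfies `ε·N·E_{‖·‖}`-privacy on bags of size `N`:
for all `b, b' : Fin N → ℝ^n` and every measurable set `A ⊆ (ℝ^n)^N` invariant under all
permutations of the coordinates,
`μ_b(A) ≤ exp(ε · min_τ Σ_i ‖b i − b' (τ i)‖) · μ_{b'}(A)`,
where `μ_b` is the product of the Laplacian measures centered at the `b i`, and
`min_τ Σ_i ‖b i − b' (τ i)‖ = N·E_{‖·‖}(b, b')` for size-`N` bags. -/
theorem product_laplacian_earth_mover_privacy (n N : ℕ) (hn : 1 ≤ n) (hN : 1 ≤ N)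
    (ε : ℝ) (hε : 0 < ε)
    (b b' : Fin N → EuclideanSpace ℝ (Fin n))
    (A : Set (Fin N → EuclideanSpace ℝ (Fin n))) (hA : MeasurableSet A)
    (hperm : ∀ σ : Equiv.Perm (Fin N), ∀ v : Fin N → EuclideanSpace ℝ (Fin n),
      v ∈ A → (fun i => v (σ i)) ∈ A) :
    Measure.pi (fun i => lapMeasure n ε (b i)) A ≤
      ENNReal.ofReal
          (Real.exp (ε * ⨅ τ : Equiv.Perm (Fin N), ∑ i, ‖b i - b' (τ i)‖)) *
        Measure.pi (fun i => lapMeasure n ε (b' i)) A := by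
  classical
  obtain ⟨τ₀, hτ₀⟩ := Finite.exists_min
    (fun τ : Equiv.Perm (Fin N) => ∑ i, ‖b i - b' (τ i)‖)
  set D := ∑ i, ‖b i - b' (τ₀ i)‖ with hD
  have hinf : (⨅ τ : Equiv.Perm (Fin N), ∑ i, ‖b i - b' (τ i)‖) = D :=
    le_antisymm (ciInf_le (Finite.bddBelow_range _) τ₀) (le_ciInf hτ₀)
  rw [hinf]
  set c : Fin N → EuclideanSpace ℝ (Fin n) := fun i => b' (τ₀ i) with hc
  -- permutation invariance step
  have hval : ∀ (x : Fin N → EuclideanSpace ℝ (Fin n)) (j : Fin N),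
      (MeasurableEquiv.piCongrLeft (fun _ : Fin N => EuclideanSpace ℝ (Fin n)) τ₀) x j
        = x (τ₀.symm j) := by
    intro x j
    have h := MeasurableEquiv.piCongrLeft_apply_apply
      (β := fun _ : Fin N => EuclideanSpace ℝ (Fin n)) τ₀ x (τ₀.symm j)
    rwa [Equiv.apply_symm_apply] at h
  have hAperm : Measure.pi (fun i => lapMeasure n ε (b' i)) A
      = Measure.pi (fun i => lapMeasure n ε (c i)) A := by
    have hmap := Measure.pi_map_piCongrLeft (ι := Fin N) τ₀
      (β := fun _ : Fin N => EuclideanSpace ℝ (Fin n)) (fun i => lapMeasure n ε (b' i))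
    rw [← hmap, MeasurableEquiv.map_apply]
    congr 1
    ext x
    simp only [Set.mem_preimage]
    have hxfun : (MeasurableEquiv.piCongrLeft
        (fun _ : Fin N => EuclideanSpace ℝ (Fin n)) τ₀) x = fun j => x (τ₀.symm j) :=
      funext (hval x)
    rw [hxfun]
    constructor
    · intro hx
      have := hperm τ₀ _ hx
      simpa using this
    · intro hx
      exact hperm τ₀.symm x hx
  -- density step
  have hmeas : ∀ y : EuclideanSpace ℝ (Fin n), Measurable fun v : EuclideanSpace ℝ (Fin n) =>
      ENNReal.ofReal (lapConst n ε * Real.exp (-ε * ‖v - y‖)) := by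
    intro y
    apply Measurable.ennreal_ofReal
    fun_prop
  have hb_eq : Measure.pi (fun i => lapMeasure n ε (b i))
      = (Measure.pi fun _ : Fin N => (volume : Measure (EuclideanSpace ℝ (Fin n)))).withDensity
          (fun x => ∏ i, ENNReal.ofReal (lapConst n ε * Real.exp (-ε * ‖x i - b i‖))) := by
    simp only [lapMeasure]
    exact pi_withDensity_aux _ _ (fun i => hmeas (b i))
  have hc_eq : Measure.pi (fun i => lapMeasure n ε (c i))
      = (Measure.pi fun _ : Fin N => (volume : Measure (EuclideanSpace ℝ (Fin n)))).withDensity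
          (fun x => ∏ i, ENNReal.ofReal (lapConst n ε * Real.exp (-ε * ‖x i - c i‖))) := by
    simp only [lapMeasure]
    exact pi_withDensity_aux _ _ (fun i => hmeas (c i))
  have hk : 0 ≤ lapConst n ε := lapConst_nonneg n hn hε
  have hpt : ∀ x : Fin N → EuclideanSpace ℝ (Fin n),
      ∏ i, ENNReal.ofReal (lapConst n ε * Real.exp (-ε * ‖x i - b i‖))
        ≤ ENNReal.ofReal (Real.exp (ε * D)) *
          ∏ i, ENNReal.ofReal (lapConst n ε * Real.exp (-ε * ‖x i - c i‖)) := by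
    intro x
    have h1 : ENNReal.ofReal (Real.exp (ε * D))
        = ∏ i, ENNReal.ofReal (Real.exp (ε * ‖b i - c i‖)) := by
      rw [hD, Finset.mul_sum, Real.exp_sum]
      exact ENNReal.ofReal_prod_of_nonneg fun i _ => Real.exp_nonneg _
    rw [h1, ← Finset.prod_mul_distrib]
    refine Finset.prod_le_prod' fun i _ => ?_
    rw [← ENNReal.ofReal_mul (Real.exp_nonneg _)]
    apply ENNReal.ofReal_le_ofReal
    have tri : ‖x i - c i‖ ≤ ‖x i - b i‖ + ‖b i - c i‖ :=
      norm_sub_le_norm_sub_add_norm_sub _ _ _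
    have hexp : -ε * ‖x i - b i‖ ≤ ε * ‖b i - c i‖ + -ε * ‖x i - c i‖ := by
      nlinarith [hε.le]
    calc lapConst n ε * Real.exp (-ε * ‖x i - b i‖)
        ≤ lapConst n ε * Real.exp (ε * ‖b i - c i‖ + -ε * ‖x i - c i‖) :=
          mul_le_mul_of_nonneg_left (Real.exp_le_exp.2 hexp) hk
      _ = Real.exp (ε * ‖b i - c i‖) * (lapConst n ε * Real.exp (-ε * ‖x i - c i‖)) := by
          rw [Real.exp_add]; ring
  calc Measure.pi (fun i => lapMeasure n ε (b i)) A
      = ∫⁻ x in A, ∏ i, ENNReal.ofReal (lapConst n ε * Real.exp (-ε * ‖x i - b i‖))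
          ∂(Measure.pi fun _ : Fin N => (volume : Measure (EuclideanSpace ℝ (Fin n)))) := by
        rw [hb_eq, withDensity_apply _ hA]
    _ ≤ ∫⁻ x in A, ENNReal.ofReal (Real.exp (ε * D)) *
          ∏ i, ENNReal.ofReal (lapConst n ε * Real.exp (-ε * ‖x i - c i‖))
          ∂(Measure.pi fun _ : Fin N => (volume : Measure (EuclideanSpace ℝ (Fin n)))) :=
        lintegral_mono fun x => hpt x
    _ = ENNReal.ofReal (Real.exp (ε * D)) *
          ∫⁻ x in A, ∏ i, ENNReal.ofReal (lapConst n ε * Real.exp (-ε * ‖x i - c i‖))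
          ∂(Measure.pi fun _ : Fin N => (volume : Measure (EuclideanSpace ℝ (Fin n)))) :=
        lintegral_const_mul' _ _ ENNReal.ofReal_ne_top
    _ = ENNReal.ofReal (Real.exp (ε * D)) * Measure.pi (fun i => lapMeasure n ε (c i)) A := by
        rw [hc_eq, withDensity_apply _ hA]
    _ = ENNReal.ofReal (Real.exp (ε * D)) * Measure.pi (fun i => lapMeasure n ε (b' i)) A := by
        rw [hAperm]
end
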